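/- arXiv:2508.15913 — 4 statements merged into one kernel-verified Lean document; each statement's English description precedes it below -/
import Mathlib

section
/- Let (Λ, dist) be a finite metric space, let D ≥ 1 be an integer and C_vol > 0 be such that |{z ∈ Λ : dist(z,x) ≤ r}| ≤ C_vol·(r+1)^D for every x ∈ Λ and every real r ≥ 0. Then for every integer k ≥ 1, every real b with 0 < b ≤ D, and every nonempty subset Z ⊆ Λ, one has |Z|^k · e^{−b·diam(Z)} ≤ C_vol^k · (kD/e)^{kD} · b^{−kD} · e^{b}, where diam(Z) is the diameter of Z and |Z| its cardinality. -/
open Finset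

lemma aux_x_exp (x : ℝ) (hx : 0 ≤ x) : x * Real.exp (-x) ≤ 1 / Real.exp 1 := by
  have h1 : x ≤ Real.exp (x - 1) := by
    have := Real.add_one_le_exp (x - 1)
    linarith
  have h2 : x * Real.exp (-x) ≤ Real.exp (x - 1) * Real.exp (-x) := by
    apply mul_le_mul_of_nonneg_right h1 (Real.exp_nonneg _)
  calc x * Real.exp (-x) ≤ Real.exp (x - 1) * Real.exp (-x) := h2
    _ = Real.exp (-1) := by rw [← Real.exp_add]; ring_nf
    _ = 1 / Real.exp 1 := by rw [Real.exp_neg]; rw [one_div]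

lemma aux_pow (n : ℕ) (hn : 1 ≤ n) (b t : ℝ) (hb : 0 < b) (ht : 0 ≤ t) :
    t ^ n * Real.exp (-b * t) ≤ ((n : ℝ) / (Real.exp 1 * b)) ^ n := by
  have hn0 : (0:ℝ) < n := by exact_mod_cast Nat.lt_of_lt_of_le Nat.zero_lt_one hn
  have hexp : Real.exp (-b * t) = (Real.exp (-(b * t) / n)) ^ n := by
    rw [← Real.exp_nat_mul]
    congr 1
    field_simp
  have key : t * Real.exp (-(b * t) / n) ≤ (n : ℝ) / (Real.exp 1 * b) := by
    set x : ℝ := b * t / n with hxdef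
    have hx0 : 0 ≤ x := by positivity
    have hne : (n : ℝ) ≠ 0 := ne_of_gt hn0
    have hte : t = (n : ℝ) * x / b := by
      rw [hxdef, mul_div_assoc', mul_div_cancel_left₀ _ hne, mul_div_cancel_left₀ _ (ne_of_gt hb)]
    have harg : -(b * t) / (n : ℝ) = -x := by
      rw [hxdef, neg_div]
    rw [harg, hte]
    have := aux_x_exp x hx0
    have h3 : (n : ℝ) * x / b * Real.exp (-x) = ((n : ℝ) / b) * (x * Real.exp (-x)) := by
      ring
    rw [h3]
    have h4 : ((n : ℝ) / b) * (x * Real.exp (-x)) ≤ ((n : ℝ) / b) * (1 / Real.exp 1) := by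
      apply mul_le_mul_of_nonneg_left this (by positivity)
    calc ((n : ℝ) / b) * (x * Real.exp (-x)) ≤ ((n : ℝ) / b) * (1 / Real.exp 1) := h4
      _ = (n : ℝ) / (Real.exp 1 * b) := by
          rw [div_mul_div_comm, mul_one, mul_comm b]
  calc t ^ n * Real.exp (-b * t) = (t * Real.exp (-(b * t) / n)) ^ n := by
        rw [mul_pow, ← hexp]
    _ ≤ ((n : ℝ) / (Real.exp 1 * b)) ^ n := by
        apply pow_le_pow_left₀ (by positivity) key

theorem stmt0 {Λ : Type*} [Fintype Λ] [MetricSpace Λ] [DecidableEq Λ]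
    (D : ℕ) (hD : 1 ≤ D) (Cvol : ℝ) (hCvol : 0 < Cvol)
    (hvol : ∀ x : Λ, ∀ r : ℝ, 0 ≤ r →
      ((Finset.univ.filter (fun z : Λ => dist z x ≤ r)).card : ℝ) ≤ Cvol * (r + 1) ^ D)
    (k : ℕ) (hk : 1 ≤ k) (b : ℝ) (hb : 0 < b) (hbD : b ≤ (D : ℝ))
    (Z : Finset Λ) (hZ : Z.Nonempty) :
    (Z.card : ℝ) ^ k * Real.exp (-b * Metric.diam (Z : Set Λ)) ≤
      Cvol ^ k * ((k * D : ℝ) / Real.exp 1) ^ (k * D) / b ^ (k * D) * Real.exp b := by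
  obtain ⟨x, hx⟩ := hZ
  set d : ℝ := Metric.diam (Z : Set Λ) with hdd
  have hd0 : 0 ≤ d := Metric.diam_nonneg
  -- card bound
  have hsub : Z ⊆ Finset.univ.filter (fun z : Λ => dist z x ≤ d) := by
    intro z hz
    simp only [Finset.mem_filter, Finset.mem_univ, true_and]
    exact Metric.dist_le_diam_of_mem (Z.finite_toSet.isBounded) hz hx
  have hcard : (Z.card : ℝ) ≤ Cvol * (d + 1) ^ D := by
    calc (Z.card : ℝ) ≤ ((Finset.univ.filter (fun z : Λ => dist z x ≤ d)).card : ℝ) := by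
          exact_mod_cast Finset.card_le_card hsub
      _ ≤ Cvol * (d + 1) ^ D := hvol x d hd0
  have hZk : (Z.card : ℝ) ^ k ≤ Cvol ^ k * (d + 1) ^ (k * D) := by
    calc (Z.card : ℝ) ^ k ≤ (Cvol * (d + 1) ^ D) ^ k :=
          pow_le_pow_left₀ (Nat.cast_nonneg _) hcard k
      _ = Cvol ^ k * (d + 1) ^ (k * D) := by
          rw [mul_pow, ← pow_mul, mul_comm D k]
  have hkD : 1 ≤ k * D := Nat.one_le_iff_ne_zero.mpr (by positivity)
  have hkey := aux_pow (k * D) hkD b (d + 1) hb (by linarith)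
  -- exp splitting
  have hsplit : Real.exp (-b * d) = Real.exp (-b * (d + 1)) * Real.exp b := by
    rw [← Real.exp_add]; ring_nf
  have hmain : (d + 1) ^ (k * D) * Real.exp (-b * (d + 1)) ≤
      ((k * D : ℝ) / Real.exp 1) ^ (k * D) / b ^ (k * D) := by
    have hE : (0:ℝ) < Real.exp 1 := Real.exp_pos 1
    calc (d + 1) ^ (k * D) * Real.exp (-b * (d + 1))
        ≤ (((k * D : ℕ) : ℝ) / (Real.exp 1 * b)) ^ (k * D) := hkey
      _ = ((k * D : ℝ) / Real.exp 1) ^ (k * D) / b ^ (k * D) := by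
          push_cast
          rw [div_pow, div_pow, mul_pow, mul_pow, div_div]
  calc (Z.card : ℝ) ^ k * Real.exp (-b * d)
      ≤ (Cvol ^ k * (d + 1) ^ (k * D)) * Real.exp (-b * d) := by
        apply mul_le_mul_of_nonneg_right hZk (Real.exp_nonneg _)
    _ = Cvol ^ k * ((d + 1) ^ (k * D) * Real.exp (-b * (d + 1))) * Real.exp b := by
        rw [hsplit]; ring
    _ ≤ Cvol ^ k * (((k * D : ℝ) / Real.exp 1) ^ (k * D) / b ^ (k * D)) * Real.exp b := by
        apply mul_le_mul_of_nonneg_right _ (Real.exp_nonneg _)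
        apply mul_le_mul_of_nonneg_left hmain (by positivity)
    _ = Cvol ^ k * ((k * D : ℝ) / Real.exp 1) ^ (k * D) / b ^ (k * D) * Real.exp b := by
        ring
end

section
/- Let H be a Hermitian operator on a finite-dimensional complex Hilbert space, let A, B be operators on this space, let β > 0, and suppose there exist constants b, v > 0, K ≥ 0 and d ≥ 0 such that ‖[τ^H_s(A), B]‖ ≤ K·(e^{b v |s|} − 1)·e^{−b d} for all s ∈ ℝ. Then for every T > 0: ‖[I_{H,β}(A), B]‖ ≤ (2βK/(√π b² v²))·e^{b(vT − d)} + (2/(√π β))·‖A‖·‖B‖·e^{−β² T²}. -/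
open MeasureTheory Real

/-- The Heisenberg time evolution `τ^H_s(A) = e^{isH} A e^{-isH}`. -/
noncomputable def heis {V : Type*} [NormedAddCommGroup V] [NormedSpace ℂ V]
    (H : V →L[ℂ] V) (s : ℝ) (A : V →L[ℂ] V) : V →L[ℂ] V :=
  NormedSpace.exp ((Complex.I * (s : ℂ)) • H) * A *
    NormedSpace.exp ((-(Complex.I * (s : ℂ))) • H)

/-- The Gaussian filter `φ_β(t) = (β/√π) e^{-β²t²}`. -/
noncomputable def phi (β t : ℝ) : ℝ := (β / Real.sqrt π) * Real.exp (-(β ^ 2 * t ^ 2))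

/-- The almost inverse Liouvillian `I_{H,β}(A) = ∫ φ_β(t) (∫_0^t τ^H_s(A) ds) dt`. -/
noncomputable def aiL {V : Type*} [NormedAddCommGroup V] [NormedSpace ℂ V]
    (H : V →L[ℂ] V) (β : ℝ) (A : V →L[ℂ] V) : V →L[ℂ] V :=
  ∫ t : ℝ, phi β t • (∫ s in (0:ℝ)..t, heis H s A)

/-! The commutator `[I_{H,β}(A), B]` is the `φ_β`-average of `[∫_0^t τ_s(A) ds, B]`.
For `|t| ≤ T` the Lieb–Robinson bound, integrated in `s`, controls this by
`K e^{-bd} (e^{bv|t|} - 1) / (bv)`; for `|t| > T` we use instead the trivial bound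
`2 ‖A‖ ‖B‖ |t|` (each `τ_s` is an isometry) against the Gaussian tail
`∫_{|t|>T} |t| e^{-β²t²} dt = e^{-β²T²} / β²`. -/

lemma norm_mul_sub_mul_le {E : Type*} [NormedRing E] (X B : E) :
    ‖X * B - B * X‖ ≤ 2 * ‖X‖ * ‖B‖ := by
  calc ‖X * B - B * X‖ ≤ ‖X‖ * ‖B‖ + ‖B‖ * ‖X‖ :=
        (norm_sub_le _ _).trans (add_le_add (norm_mul_le _ _) (norm_mul_le _ _))
    _ = 2 * ‖X‖ * ‖B‖ := by ring

section Commutator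

variable {E : Type*} [NormedRing E] [NormedAlgebra ℝ E] [CompleteSpace E]

lemma integral_mul_sub_mul {α : Type*} [MeasurableSpace α] {μ : Measure α} {f : α → E}
    (hf : Integrable f μ) (B : E) :
    (∫ x, f x ∂μ) * B - B * ∫ x, f x ∂μ = ∫ x, (f x * B - B * f x) ∂μ :=
  (((ContinuousLinearMap.mul ℝ E).flip B -
    ContinuousLinearMap.mul ℝ E B).integral_comp_comm hf).symm

lemma intervalIntegral_mul_sub_mul {f : ℝ → E} {a b : ℝ}
    (hf : IntervalIntegrable f volume a b) (B : E) :
    (∫ x in a..b, f x) * B - B * ∫ x in a..b, f x = ∫ x in a..b, (f x * B - B * f x) :=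
  (((ContinuousLinearMap.mul ℝ E).flip B -
    ContinuousLinearMap.mul ℝ E B).intervalIntegral_comp_comm hf).symm

end Commutator

lemma integral_exp_mul_of_ne_zero {c : ℝ} (hc : c ≠ 0) (t : ℝ) :
    ∫ s in (0 : ℝ)..t, Real.exp (c * s) = (Real.exp (c * t) - 1) / c := by
  simp only [intervalIntegral.integral_comp_mul_left (fun x => Real.exp x) hc, mul_zero,
    integral_exp, exp_zero, smul_eq_mul]
  field_simp

lemma norm_intervalIntegral_le_of_norm_le_mul_exp_of_nonneg {E : Type*} [NormedAddCommGroup E]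
    [NormedSpace ℝ E] {f : ℝ → E} {M c : ℝ} (hc : 0 < c)
    (hf : ∀ s, ‖f s‖ ≤ M * Real.exp (c * |s|)) {t : ℝ} (ht : 0 ≤ t) :
    ‖∫ s in (0 : ℝ)..t, f s‖ ≤ M / c * (Real.exp (c * t) - 1) := by
  calc ‖∫ s in (0 : ℝ)..t, f s‖ ≤ ∫ s in (0 : ℝ)..t, M * Real.exp (c * s) := by
        refine intervalIntegral.norm_integral_le_of_norm_le ht
          (Filter.Eventually.of_forall fun s hs => ?_)
          ((by fun_prop : Continuous fun s => M * Real.exp (c * s)).intervalIntegrable _ _)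
        simpa only [abs_of_pos hs.1] using hf s
    _ = M / c * (Real.exp (c * t) - 1) := by
        rw [intervalIntegral.integral_const_mul, integral_exp_mul_of_ne_zero hc.ne']
        ring

lemma norm_intervalIntegral_le_of_norm_le_mul_exp {E : Type*} [NormedAddCommGroup E]
    [NormedSpace ℝ E] {f : ℝ → E} {M c : ℝ} (hc : 0 < c)
    (hf : ∀ s, ‖f s‖ ≤ M * Real.exp (c * |s|)) (t : ℝ) :
    ‖∫ s in (0 : ℝ)..t, f s‖ ≤ M / c * (Real.exp (c * |t|) - 1) := by
  rcases le_total 0 t with ht | ht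
  · rw [abs_of_nonneg ht]
    exact norm_intervalIntegral_le_of_norm_le_mul_exp_of_nonneg hc hf ht
  · have hf' (s : ℝ) : ‖f (-s)‖ ≤ M * Real.exp (c * |s|) := by
      simpa only [abs_neg] using hf (-s)
    have key := norm_intervalIntegral_le_of_norm_le_mul_exp_of_nonneg hc hf' (neg_nonneg.2 ht)
    rwa [intervalIntegral.integral_comp_neg, neg_neg, neg_zero, intervalIntegral.integral_symm,
      norm_neg, ← abs_of_nonpos ht] at key

lemma integral_Icc_le_of_abs_le_mul_exp {g : ℝ → ℝ} (hg : Continuous g) {M c : ℝ}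
    (hc : 0 < c) (hbound : ∀ t, |g t| ≤ M * Real.exp (c * |t|)) {T : ℝ} (hT : 0 ≤ T) :
    ∫ t in Set.Icc (-T) T, g t ≤ 2 * (M / c * (Real.exp (c * T) - 1)) := by
  have hT' : |-T| = T := by rw [abs_neg, abs_of_nonneg hT]
  rw [integral_Icc_eq_integral_Ioc, ← intervalIntegral.integral_of_le (by linarith),
    ← intervalIntegral.integral_interval_sub_left (hg.intervalIntegrable 0 T)
      (hg.intervalIntegrable 0 (-T))]
  have hbound' : ∀ t, ‖g t‖ ≤ M * Real.exp (c * |t|) := hbound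
  have h₁ := norm_intervalIntegral_le_of_norm_le_mul_exp hc hbound' T
  have h₂ := norm_intervalIntegral_le_of_norm_le_mul_exp hc hbound' (-T)
  rw [Real.norm_eq_abs, abs_of_nonneg hT] at h₁
  rw [Real.norm_eq_abs, hT'] at h₂
  linarith [le_abs_self (∫ t in (0 : ℝ)..T, g t), neg_abs_le (∫ t in (0 : ℝ)..(-T), g t)]

lemma integrable_abs_mul_exp_neg_mul_sq {a : ℝ} (ha : 0 < a) :
    Integrable fun x : ℝ => |x| * Real.exp (-(a * x ^ 2)) := by
  simpa [neg_mul, abs_mul] using (integrable_mul_exp_neg_mul_sq ha).abs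

lemma integral_Ioi_mul_exp_neg_mul_sq {a : ℝ} (ha : 0 < a) (T : ℝ) :
    ∫ x in Set.Ioi T, x * Real.exp (-(a * x ^ 2)) = Real.exp (-(a * T ^ 2)) / (2 * a) := by
  have hderiv : ∀ x ∈ Set.Ici T, HasDerivAt (fun y => -(2 * a)⁻¹ * Real.exp (-(a * y ^ 2)))
      (x * Real.exp (-(a * x ^ 2))) x := by
    intro x _
    refine ((((hasDerivAt_pow 2 x).const_mul a).fun_neg.exp).const_mul
      (-(2 * a)⁻¹)).congr_deriv ?_
    field_simp
    norm_num
  have hint : IntegrableOn (fun x => x * Real.exp (-(a * x ^ 2))) (Set.Ioi T) := by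
    simpa only [neg_mul] using (integrable_mul_exp_neg_mul_sq ha).integrableOn
  have hlim : Filter.Tendsto (fun y => -(2 * a)⁻¹ * Real.exp (-(a * y ^ 2)))
      Filter.atTop (nhds 0) := by
    have h := Filter.tendsto_neg_atTop_atBot.comp
      ((Filter.tendsto_pow_atTop two_ne_zero).const_mul_atTop ha)
    simpa using (Real.tendsto_exp_atBot.comp h).const_mul (-(2 * a)⁻¹)
  rw [integral_Ioi_of_hasDerivAt_of_tendsto' hderiv hint hlim]
  field_simp
  ring

lemma integral_compl_Icc_abs_mul_exp_neg_mul_sq {a : ℝ} (ha : 0 < a) {T : ℝ} (hT : 0 ≤ T) :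
    ∫ x in (Set.Icc (-T) T)ᶜ, |x| * Real.exp (-(a * x ^ 2)) = Real.exp (-(a * T ^ 2)) / a := by
  set f : ℝ → ℝ := fun x => |x| * Real.exp (-(a * x ^ 2))
  have hf : ∀ s, IntegrableOn f s := fun _ => (integrable_abs_mul_exp_neg_mul_sq ha).integrableOn
  have hcompl : (Set.Icc (-T) T)ᶜ = Set.Iio (-T) ∪ Set.Ioi T := by
    ext x
    simp only [Set.mem_compl_iff, Set.mem_Icc, Set.mem_union, Set.mem_Iio, Set.mem_Ioi,
      not_and_or, not_le]
  have hdisj : Disjoint (Set.Iio (-T)) (Set.Ioi T) :=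
    (Set.Iic_disjoint_Ioi (by linarith)).mono_left Set.Iio_subset_Iic_self
  have hIio : ∫ x in Set.Iio (-T), f x = ∫ x in Set.Ioi T, f x := by
    rw [← integral_Iic_eq_integral_Iio, ← integral_comp_neg_Ioi]
    simp only [f, abs_neg, neg_sq]
  have hIoi : ∫ x in Set.Ioi T, f x = Real.exp (-(a * T ^ 2)) / (2 * a) := by
    rw [← integral_Ioi_mul_exp_neg_mul_sq ha T]
    refine setIntegral_congr_fun measurableSet_Ioi fun x hx => ?_
    simp only [f, abs_of_pos (hT.trans_lt hx)]
  rw [hcompl, setIntegral_union hdisj measurableSet_Ioi (hf _) (hf _), hIio, hIoi]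
  field_simp
  ring

lemma phi_nonneg {β : ℝ} (hβ : 0 ≤ β) (t : ℝ) : 0 ≤ phi β t := by
  unfold phi
  positivity

lemma phi_le {β : ℝ} (hβ : 0 ≤ β) (t : ℝ) : phi β t ≤ β / Real.sqrt π := by
  unfold phi
  exact mul_le_of_le_one_right (by positivity) (Real.exp_le_one_iff.2 (by nlinarith))

lemma continuous_phi (β : ℝ) : Continuous (phi β) := by
  unfold phi
  fun_prop

section Heisenberg

variable {V : Type*} [NormedAddCommGroup V] [InnerProductSpace ℂ V] [CompleteSpace V]
  {H : V →L[ℂ] V}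

lemma heis_eq_expUnitary_mul (hH : IsSelfAdjoint H) (s : ℝ) (A : V →L[ℂ] V) :
    heis H s A =
      (selfAdjoint.expUnitary (s • ⟨H, selfAdjoint.mem_iff.2 hH⟩) : V →L[ℂ] V) * A *
      (selfAdjoint.expUnitary ((-s) • ⟨H, selfAdjoint.mem_iff.2 hH⟩) : V →L[ℂ] V) := by
  simp only [heis, selfAdjoint.expUnitary_coe, selfAdjoint.val_smul]
  rw [← Complex.coe_smul, ← Complex.coe_smul, smul_smul, smul_smul]
  congr 4
  push_cast
  ring

lemma norm_heis (hH : IsSelfAdjoint H) (s : ℝ) (A : V →L[ℂ] V) :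
    ‖heis H s A‖ = ‖A‖ := by
  rw [heis_eq_expUnitary_mul hH, CStarRing.norm_mul_coe_unitary, CStarRing.norm_coe_unitary_mul]

lemma continuous_heis (hH : IsSelfAdjoint H) (A : V →L[ℂ] V) :
    Continuous fun s : ℝ => heis H s A := by
  simp_rw [heis_eq_expUnitary_mul hH]
  have hu : Continuous fun s : ℝ =>
      (selfAdjoint.expUnitary (s • ⟨H, selfAdjoint.mem_iff.2 hH⟩) : V →L[ℂ] V) := by
    refine continuous_subtype_val.comp (selfAdjoint.continuous_expUnitary.comp ?_)
    exact (continuous_id.smul (continuous_const (y := H))).subtype_mk _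
  exact (hu.mul continuous_const).mul (hu.comp continuous_neg)

end Heisenberg

noncomputable def heisPrimitive {V : Type*} [NormedAddCommGroup V] [NormedSpace ℂ V]
    (H A : V →L[ℂ] V) (t : ℝ) : V →L[ℂ] V :=
  ∫ s in (0 : ℝ)..t, heis H s A

section Primitive

variable {V : Type*} [NormedAddCommGroup V] [InnerProductSpace ℂ V] [CompleteSpace V]
  {H A B : V →L[ℂ] V}

lemma norm_heisPrimitive_le (hH : IsSelfAdjoint H) (t : ℝ) :
    ‖heisPrimitive H A t‖ ≤ ‖A‖ * |t| := by
  simpa [heisPrimitive] using intervalIntegral.norm_integral_le_of_norm_le_const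
    (a := 0) (b := t) fun s _ => (norm_heis hH s A).le

lemma continuous_heisPrimitive (hH : IsSelfAdjoint H) : Continuous (heisPrimitive H A) :=
  intervalIntegral.continuous_primitive
    (fun _ _ => (continuous_heis hH A).intervalIntegrable _ _) 0

lemma integrable_phi_smul_heisPrimitive (hH : IsSelfAdjoint H) {β : ℝ} (hβ : 0 < β) :
    Integrable fun t => phi β t • heisPrimitive H A t := by
  refine (((integrable_abs_mul_exp_neg_mul_sq (pow_pos hβ 2)).const_mul
    (β / Real.sqrt π * ‖A‖))).mono' ((continuous_phi β).smul
      (continuous_heisPrimitive hH)).aestronglyMeasurable (ae_of_all _ fun t => ?_)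
  rw [norm_smul, Real.norm_of_nonneg (phi_nonneg hβ.le t)]
  calc phi β t * ‖heisPrimitive H A t‖ ≤ phi β t * (‖A‖ * |t|) := by
        gcongr
        · exact phi_nonneg hβ.le t
        · exact norm_heisPrimitive_le hH t
    _ = _ := by unfold phi; ring

lemma integral_Icc_phi_mul_norm_commutator_le (hH : IsSelfAdjoint H) {β : ℝ} (hβ : 0 ≤ β)
    {M c : ℝ} (hc : 0 < c)
    (hLR : ∀ s, ‖heis H s A * B - B * heis H s A‖ ≤ M * Real.exp (c * |s|))
    {T : ℝ} (hT : 0 ≤ T) :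
    ∫ t in Set.Icc (-T) T, phi β t * ‖heisPrimitive H A t * B - B * heisPrimitive H A t‖ ≤
      2 * β * M / (Real.sqrt π * c ^ 2) * Real.exp (c * T) := by
  have hM : 0 ≤ M := by simpa using (norm_nonneg _).trans (hLR 0)
  have hcomm (t : ℝ) : ‖heisPrimitive H A t * B - B * heisPrimitive H A t‖ ≤
      M / c * (Real.exp (c * |t|) - 1) := by
    rw [heisPrimitive,
      intervalIntegral_mul_sub_mul ((continuous_heis hH A).intervalIntegrable _ _)]
    exact norm_intervalIntegral_le_of_norm_le_mul_exp hc hLR t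
  have hbound (t : ℝ) : |phi β t * ‖heisPrimitive H A t * B - B * heisPrimitive H A t‖| ≤
      β / Real.sqrt π * (M / c) * Real.exp (c * |t|) := by
    rw [abs_of_nonneg (mul_nonneg (phi_nonneg hβ t) (norm_nonneg _)), mul_assoc]
    refine mul_le_mul (phi_le hβ t) ((hcomm t).trans ?_) (by positivity) (by positivity)
    nlinarith [div_nonneg hM hc.le]
  have hcont : Continuous fun t =>
      phi β t * ‖heisPrimitive H A t * B - B * heisPrimitive H A t‖ :=
    have hP := continuous_heisPrimitive (A := A) hH
    (continuous_phi β).mul ((hP.mul continuous_const).sub (continuous_const.mul hP)).norm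
  calc _ ≤ 2 * (β / Real.sqrt π * (M / c) / c * (Real.exp (c * T) - 1)) :=
        integral_Icc_le_of_abs_le_mul_exp hcont hc hbound hT
    _ ≤ 2 * β * M / (Real.sqrt π * c ^ 2) * Real.exp (c * T) := by
        have : 0 ≤ 2 * β * M / (Real.sqrt π * c ^ 2) := by positivity
        rw [show 2 * (β / Real.sqrt π * (M / c) / c * (Real.exp (c * T) - 1)) =
          2 * β * M / (Real.sqrt π * c ^ 2) * (Real.exp (c * T) - 1) by field_simp]
        nlinarith

lemma integral_compl_Icc_phi_mul_norm_commutator_le (hH : IsSelfAdjoint H)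
    {β : ℝ} (hβ : 0 < β) {T : ℝ} (hT : 0 ≤ T) :
    ∫ t in (Set.Icc (-T) T)ᶜ,
      phi β t * ‖heisPrimitive H A t * B - B * heisPrimitive H A t‖ ≤
      2 / (Real.sqrt π * β) * ‖A‖ * ‖B‖ * Real.exp (-(β ^ 2 * T ^ 2)) := by
  have hbound (t : ℝ) : phi β t * ‖heisPrimitive H A t * B - B * heisPrimitive H A t‖ ≤
      2 * β * ‖A‖ * ‖B‖ / Real.sqrt π * (|t| * Real.exp (-(β ^ 2 * t ^ 2))) := by
    calc _ ≤ phi β t * (2 * (‖A‖ * |t|) * ‖B‖) := by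
          gcongr
          · exact phi_nonneg hβ.le t
          · exact (norm_mul_sub_mul_le _ _).trans (by gcongr; exact norm_heisPrimitive_le hH t)
      _ = _ := by unfold phi; ring
  calc _ ≤ ∫ t in (Set.Icc (-T) T)ᶜ,
        2 * β * ‖A‖ * ‖B‖ / Real.sqrt π * (|t| * Real.exp (-(β ^ 2 * t ^ 2))) :=
        integral_mono_of_nonneg
          (ae_of_all _ fun t => mul_nonneg (phi_nonneg hβ.le t) (norm_nonneg _))
          ((integrable_abs_mul_exp_neg_mul_sq (pow_pos hβ 2)).const_mul _).integrableOn
          (ae_of_all _ hbound)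
    _ = _ := by
        rw [integral_const_mul, integral_compl_Icc_abs_mul_exp_neg_mul_sq (pow_pos hβ 2) hT]
        field_simp

end Primitive

theorem stmt1_general {V : Type*} [NormedAddCommGroup V] [InnerProductSpace ℂ V]
    [FiniteDimensional ℂ V]
    (H A B : V →L[ℂ] V) (hH : IsSelfAdjoint H) (β : ℝ) (hβ : 0 < β)
    (b v K d : ℝ) (hb : 0 < b) (hv : 0 < v) (hK : 0 ≤ K)
    (hLR : ∀ s : ℝ, ‖heis H s A * B - B * heis H s A‖ ≤
      K * (Real.exp (b * v * |s|) - 1) * Real.exp (-(b * d)))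
    (T : ℝ) (hT : 0 < T) :
    ‖aiL H β A * B - B * aiL H β A‖ ≤
      2 * β * K / (Real.sqrt π * b ^ 2 * v ^ 2) * Real.exp (b * (v * T - d))
      + 2 / (Real.sqrt π * β) * ‖A‖ * ‖B‖ * Real.exp (-(β ^ 2 * T ^ 2)) := by
  set P := heisPrimitive H A
  set F := fun t => phi β t • P t
  have hF : Integrable F := integrable_phi_smul_heisPrimitive hH hβ
  have hnorm (t : ℝ) : ‖F t * B - B * F t‖ = phi β t * ‖P t * B - B * P t‖ := by
    rw [smul_mul_assoc, mul_smul_comm, ← smul_sub, norm_smul,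
      Real.norm_of_nonneg (phi_nonneg hβ.le t)]
  have hint : Integrable fun t => phi β t * ‖P t * B - B * P t‖ :=
    ((hF.mul_const B).sub (hF.const_mul B)).norm.congr (ae_of_all _ hnorm)
  have hLR' (s : ℝ) : ‖heis H s A * B - B * heis H s A‖ ≤
      K * Real.exp (-(b * d)) * Real.exp (b * v * |s|) := by
    nlinarith [hLR s, Real.exp_pos (-(b * d)), Real.exp_pos (b * v * |s|)]
  calc ‖aiL H β A * B - B * aiL H β A‖ = ‖∫ t, (F t * B - B * F t)‖ := by
        rw [← integral_mul_sub_mul hF]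
        rfl
    _ ≤ ∫ t, phi β t * ‖P t * B - B * P t‖ :=
        (norm_integral_le_integral_norm _).trans_eq (by simp only [hnorm])
    _ = (∫ t in Set.Icc (-T) T, phi β t * ‖P t * B - B * P t‖) +
          ∫ t in (Set.Icc (-T) T)ᶜ, phi β t * ‖P t * B - B * P t‖ :=
        (integral_add_compl measurableSet_Icc hint).symm
    _ ≤ _ := by
        refine add_le_add ((integral_Icc_phi_mul_norm_commutator_le hH hβ.le (mul_pos hb hv)
          hLR' hT.le).trans_eq ?_) (integral_compl_Icc_phi_mul_norm_commutator_le hH hβ hT.le)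
        rw [mul_sub, Real.exp_sub, Real.exp_neg, ← mul_assoc]
        field_simp

theorem stmt1 {V : Type*} [NormedAddCommGroup V] [InnerProductSpace ℂ V]
    [FiniteDimensional ℂ V]
    (H A B : V →L[ℂ] V) (hH : IsSelfAdjoint H) (β : ℝ) (hβ : 0 < β)
    (b v K d : ℝ) (hb : 0 < b) (hv : 0 < v) (hK : 0 ≤ K) (hd : 0 ≤ d)
    (hLR : ∀ s : ℝ, ‖heis H s A * B - B * heis H s A‖ ≤
      K * (Real.exp (b * v * |s|) - 1) * Real.exp (-(b * d)))
    (T : ℝ) (hT : 0 < T) :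
    ‖aiL H β A * B - B * aiL H β A‖ ≤
      2 * β * K / (Real.sqrt π * b ^ 2 * v ^ 2) * Real.exp (b * (v * T - d))
      + 2 / (Real.sqrt π * β) * ‖A‖ * ‖B‖ * Real.exp (-(β ^ 2 * T ^ 2)) :=
  stmt1_general H A B hH β hβ b v K d hb hv hK hLR T hT
end

section
/- Let H be a Hermitian operator on a finite-dimensional complex Hilbert space with spectral decomposition H = ∑_{μ∈ι} E_μ P_μ. Then for every β > 0 and every operator A, ∫_ℝ φ_β(t) τ^H_t(A) dt = ∑_{μ∈ι} ∑_{ν∈ι} e^{−(E_μ−E_ν)²/(4β²)} P_μ A P_ν. -/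
open MeasureTheory Real

/-! Because the spectral projections are complete orthogonal idempotents, `a ↦ ∑ μ, a μ • P μ` is
a continuous algebra homomorphism `(ι → ℂ) →ₐ[ℂ] (V →L[ℂ] V)`. It therefore commutes with `exp`,
which gives `τ_t(A) = ∑ μ ν, e^{it(E_μ - E_ν)} P_μ A P_ν`. Integrating against `φ_β` term by
term leaves the Fourier transform of a Gaussian, `∫ φ_β(t) e^{itω} dt = e^{-ω²/(4β²)}`. -/

section SpectralCalculus

variable {𝕜 R ι : Type*} [Fintype ι] {P : ι → R}

section Algebra

variable [CommSemiring 𝕜] [Semiring R] [Algebra 𝕜 R]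

lemma OrthogonalIdempotents.sum_smul_mul_sum_smul (he : OrthogonalIdempotents P) (a b : ι → 𝕜) :
    (∑ μ, a μ • P μ) * (∑ ν, b ν • P ν) = ∑ μ, (a μ * b μ) • P μ := by
  classical
  simp only [Finset.sum_mul, Finset.mul_sum, smul_mul_smul, he.mul_eq, smul_ite, smul_zero,
    Finset.sum_ite_eq', Finset.mem_univ, if_true]

lemma sum_smul_mul_mul_sum_smul (a b : ι → 𝕜) (X : R) :
    (∑ μ, a μ • P μ) * X * (∑ ν, b ν • P ν) = ∑ μ, ∑ ν, (a μ * b ν) • (P μ * X * P ν) := by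
  simp only [Finset.sum_mul, Finset.mul_sum, smul_mul_assoc, mul_smul_comm, Finset.smul_sum,
    smul_smul]
  rw [Finset.sum_comm]
  simp only [mul_comm]

noncomputable def CompleteOrthogonalIdempotents.sumSMulAlgHom
    (he : CompleteOrthogonalIdempotents P) : (ι → 𝕜) →ₐ[𝕜] R :=
  AlgHom.ofLinearMap (Fintype.linearCombination 𝕜 P)
    (by simpa [Fintype.linearCombination_apply] using he.complete)
    (fun a b ↦ by
      simp only [Fintype.linearCombination_apply, Pi.mul_apply,
        he.toOrthogonalIdempotents.sum_smul_mul_sum_smul])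

lemma CompleteOrthogonalIdempotents.sumSMulAlgHom_apply (he : CompleteOrthogonalIdempotents P)
    (a : ι → 𝕜) : he.sumSMulAlgHom a = ∑ μ, a μ • P μ :=
  Fintype.linearCombination_apply 𝕜 P a

end Algebra

lemma CompleteOrthogonalIdempotents.exp_sum_smul [RCLike 𝕜] [NormedRing R] [NormedAlgebra 𝕜 R]
    (he : CompleteOrthogonalIdempotents P) (a : ι → 𝕜) :
    NormedSpace.exp (∑ μ, a μ • P μ) = ∑ μ, NormedSpace.exp (a μ) • P μ := by
  have hcont : Continuous (he.sumSMulAlgHom (𝕜 := 𝕜)) := by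
    simp only [funext he.sumSMulAlgHom_apply]
    fun_prop
  have hball : a ∈ Metric.eball 0 (NormedSpace.expSeries 𝕜 (ι → 𝕜)).radius := by
    simp [NormedSpace.expSeries_radius_eq_top]
  rw [← he.sumSMulAlgHom_apply, ← NormedSpace.map_exp_of_mem_ball _ hcont a hball,
    he.sumSMulAlgHom_apply, Pi.exp_def]

end SpectralCalculus

lemma heis_sum_smul {ι V : Type*} [Fintype ι] [NormedAddCommGroup V] [NormedSpace ℂ V]
    {P : ι → V →L[ℂ] V} (he : CompleteOrthogonalIdempotents P) (E : ι → ℂ) (t : ℝ)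
    (A : V →L[ℂ] V) :
    heis (∑ μ, E μ • P μ) t A =
      ∑ μ, ∑ ν, Complex.exp (Complex.I * t * (E μ - E ν)) • (P μ * A * P ν) := by
  have hexp (c : ℂ) : NormedSpace.exp (c • ∑ μ, E μ • P μ) =
      ∑ μ, Complex.exp (c * E μ) • P μ := by
    simp only [Finset.smul_sum, smul_smul, he.exp_sum_smul, Complex.exp_eq_exp_ℂ]
  simp only [heis, hexp, sum_smul_mul_mul_sum_smul, ← Complex.exp_add]
  congr! 4
  ring

section GaussianFilter

open Complex

lemma ofReal_phi_mul_cexp (β t ω : ℝ) :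
    (phi β t : ℂ) * cexp (I * t * ω) =
      ((β / √π : ℝ) : ℂ) * cexp (-(β : ℂ) ^ 2 * t ^ 2 + I * ω * t + 0) := by
  rw [phi, add_zero, add_comm]
  push_cast
  rw [mul_assoc, ← Complex.exp_add]
  ring_nf

lemma integrable_phi_mul_cexp {β : ℝ} (hβ : β ≠ 0) (ω : ℝ) :
    Integrable fun t : ℝ ↦ (phi β t : ℂ) * cexp (I * t * ω) := by
  simp only [ofReal_phi_mul_cexp]
  refine (integrable_cexp_quadratic ?_ _ _).const_mul _
  rw [← ofReal_pow, ofReal_re]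
  positivity

lemma integral_phi_mul_cexp {β : ℝ} (hβ : 0 < β) (ω : ℝ) :
    ∫ t : ℝ, (phi β t : ℂ) * cexp (I * t * ω) = Real.exp (-(ω ^ 2 / (4 * β ^ 2))) := by
  have hsqrt : ((π : ℂ) / (β : ℂ) ^ 2) ^ (1 / 2 : ℂ) = ((√π / β : ℝ) : ℂ) := by
    rw [show (π : ℂ) / (β : ℂ) ^ 2 = ((π / β ^ 2 : ℝ) : ℂ) by push_cast; rfl,
      show (1 / 2 : ℂ) = ((1 / 2 : ℝ) : ℂ) by norm_num, ← ofReal_cpow (by positivity),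
      ← Real.sqrt_eq_rpow, Real.sqrt_div' _ (sq_nonneg β), Real.sqrt_sq hβ.le]
  have hquad : (-(β : ℂ) ^ 2).re < 0 := by
    rw [← ofReal_pow, ← ofReal_neg, ofReal_re]
    nlinarith
  simp only [ofReal_phi_mul_cexp, integral_const_mul, integral_cexp_quadratic hquad, neg_neg,
    hsqrt, ← mul_assoc, ← ofReal_mul, ofReal_exp]
  rw [div_mul_div_cancel₀ (by positivity), div_self hβ.ne', ofReal_one, one_mul]
  congr 1
  push_cast
  linear_combination (ω ^ 2 / (4 * β ^ 2) : ℂ) * I_sq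

end GaussianFilter

theorem stmt4_general {V : Type*} [NormedAddCommGroup V] [InnerProductSpace ℂ V]
    [FiniteDimensional ℂ V]
    {ι : Type*} [Fintype ι] (E : ι → ℝ) (Pr : ι → (V →L[ℂ] V))
    (hPidem : ∀ μ, Pr μ * Pr μ = Pr μ)
    (hPorth : ∀ μ ν, μ ≠ ν → Pr μ * Pr ν = 0)
    (hPsum : ∑ μ, Pr μ = 1)
    (H : V →L[ℂ] V) (hH : H = ∑ μ, (E μ : ℂ) • Pr μ)
    (β : ℝ) (hβ : 0 < β) (A : V →L[ℂ] V) :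
    ∫ t : ℝ, phi β t • heis H t A =
      ∑ μ, ∑ ν, Real.exp (-((E μ - E ν) ^ 2 / (4 * β ^ 2))) • (Pr μ * A * Pr ν) := by
  have he : CompleteOrthogonalIdempotents Pr := ⟨⟨hPidem, hPorth⟩, hPsum⟩
  have hint (μ ν : ι) : Integrable fun t : ℝ ↦
      ((phi β t : ℂ) * Complex.exp (Complex.I * t * ↑(E μ - E ν))) • (Pr μ * A * Pr ν) :=
    (integrable_phi_mul_cexp hβ.ne' _).smul_const _
  have hexpand (t : ℝ) : phi β t • heis H t A = ∑ μ, ∑ ν,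
      ((phi β t : ℂ) * Complex.exp (Complex.I * t * ↑(E μ - E ν))) • (Pr μ * A * Pr ν) := by
    simp only [hH, heis_sum_smul he, Finset.smul_sum, ← Complex.coe_smul, smul_smul,
      Complex.ofReal_sub]
  simp only [hexpand]
  rw [integral_finsetSum _ fun μ _ ↦ integrable_finsetSum _ fun ν _ ↦ hint μ ν]
  refine Finset.sum_congr rfl fun μ _ ↦ ?_
  rw [integral_finsetSum _ fun ν _ ↦ hint μ ν]
  refine Finset.sum_congr rfl fun ν _ ↦ ?_
  rw [integral_smul_const, integral_phi_mul_cexp hβ, Complex.coe_smul]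

theorem stmt4 {V : Type*} [NormedAddCommGroup V] [InnerProductSpace ℂ V]
    [FiniteDimensional ℂ V]
    {ι : Type*} [Fintype ι] (E : ι → ℝ) (Pr : ι → (V →L[ℂ] V))
    (hPsa : ∀ μ, IsSelfAdjoint (Pr μ))
    (hPidem : ∀ μ, Pr μ * Pr μ = Pr μ)
    (hPorth : ∀ μ ν, μ ≠ ν → Pr μ * Pr ν = 0)
    (hPsum : ∑ μ, Pr μ = 1)
    (H : V →L[ℂ] V) (hH : H = ∑ μ, (E μ : ℂ) • Pr μ)
    (β : ℝ) (hβ : 0 < β) (A : V →L[ℂ] V) :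
    ∫ t : ℝ, phi β t • heis H t A =
      ∑ μ, ∑ ν, Real.exp (-((E μ - E ν) ^ 2 / (4 * β ^ 2))) • (Pr μ * A * Pr ν) :=
  stmt4_general E Pr hPidem hPorth hPsum H hH β hβ A
end

section
/- Let H be a Hermitian operator on a finite-dimensional complex Hilbert space with spectral decomposition H = ∑_{μ∈ι} E_μ P_μ, let S ⊆ ι be nonempty, let γ > 0 and 0 ≤ Δ < γ/4 be such that E_ν − E_μ ≤ Δ for every ν ∈ S and every μ ∈ ι. Then for every operator A and every β > 0, ‖∑_{μ∈ι} ∑_{ν∈S} G_{β,γ}(E_ν − E_μ) P_μ A P_ν‖ ≤ (4|S|/√π)·(β/γ)·e^{−γ²/(64β²)}·‖A‖. -/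
/-!
For `ν ∈ S` every filter value `G β γ (E ν - E μ)` is a Gaussian tail cut off at least
`γ / (8β)` below zero, so the Mills-ratio bound `∫ₜ^∞ e^{-x²} ≤ e^{-t²} / (2t)` bounds it by
`c = 4/√π · (β/γ) · e^{-γ²/(64β²)}`. Regrouping the operator as
`∑_{ν ∈ S} (∑_μ G β γ (E ν - E μ) • P μ) * A * P ν`, each inner sum acts diagonally on the
orthogonal decomposition `x = ∑_μ P μ x` with coefficients in `[0, c]`, so it has norm `≤ c`,
while `‖P ν‖ ≤ 1`; the triangle inequality over `S` supplies the factor `|S|`.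
-/

open MeasureTheory Real

/-- `G_{β,γ}(ω) = (1/√π) ∫_{-∞}^{(ω-γ/2)/(2β)} e^{-x²} dx`, the convolution of a step
function at `γ/2` with the Gaussian filter. -/
noncomputable def G (β γ ω : ℝ) : ℝ :=
  (1 / Real.sqrt π) * ∫ x in Set.Iio ((ω - γ / 2) / (2 * β)), Real.exp (-(x ^ 2))

open Set Filter Topology

theorem integral_Ioi_exp_neg_sq_le {s : ℝ} (hs : 0 < s) :
    ∫ x in Ioi s, exp (-x ^ 2) ≤ exp (-s ^ 2) / (2 * s) := by
  have hint : IntegrableOn (fun x => exp (-x ^ 2)) (Ioi s) := by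
    simpa using (integrable_exp_neg_mul_sq one_pos).integrableOn
  have hint' : IntegrableOn (fun x => x / s * exp (-x ^ 2)) (Ioi s) := by
    simpa [div_mul_eq_mul_div, mul_div_assoc] using
      ((integrable_mul_exp_neg_mul_sq one_pos).div_const s).integrableOn
  have hderiv : ∀ x ∈ Ici s,
      HasDerivAt (fun y => -exp (-y ^ 2) / (2 * s)) (x / s * exp (-x ^ 2)) x := by
    intro x _
    refine ((hasDerivAt_pow 2 x).fun_neg.exp.fun_neg.div_const (2 * s)).congr_deriv ?_
    field_simp
    ring
  have hlim : Tendsto (fun y => -exp (-y ^ 2) / (2 * s)) atTop (𝓝 0) := by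
    simpa using ((tendsto_exp_atBot.comp
      (tendsto_neg_atTop_atBot.comp (tendsto_pow_atTop two_ne_zero))).neg.div_const (2 * s))
  calc ∫ x in Ioi s, exp (-x ^ 2)
      ≤ ∫ x in Ioi s, x / s * exp (-x ^ 2) := by
        exact setIntegral_mono_on hint hint' measurableSet_Ioi fun x hx =>
          le_mul_of_one_le_left (exp_pos _).le ((one_le_div hs).mpr hx.le)
    _ = exp (-s ^ 2) / (2 * s) := by
        rw [integral_Ioi_of_hasDerivAt_of_tendsto' hderiv hint' hlim]
        ring

theorem integral_Iio_exp_neg_sq_le {u t : ℝ} (ht : 0 < t) (hu : u ≤ -t) :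
    ∫ x in Iio u, exp (-x ^ 2) ≤ exp (-t ^ 2) / (2 * t) := by
  calc ∫ x in Iio u, exp (-x ^ 2)
      ≤ ∫ x in Iic (-t), exp (-x ^ 2) := by
        refine setIntegral_mono_set ?_ ?_ ?_
        · simpa using (integrable_exp_neg_mul_sq one_pos).integrableOn
        · exact Eventually.of_forall fun x => (exp_pos _).le
        · exact Eventually.of_forall (Iio_subset_Iic hu)
    _ = ∫ x in Ioi t, exp (-x ^ 2) := by
        rw [← neg_neg t, ← integral_comp_neg_Iic, neg_neg]
        simp only [neg_sq]
    _ ≤ exp (-t ^ 2) / (2 * t) := integral_Ioi_exp_neg_sq_le ht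

theorem G_nonneg (β γ ω : ℝ) : 0 ≤ G β γ ω :=
  mul_nonneg (by positivity) (setIntegral_nonneg measurableSet_Iio fun _ _ => (exp_pos _).le)

theorem G_le {β γ ω : ℝ} (hβ : 0 < β) (hγ : 0 < γ) (hω : ω ≤ γ / 4) :
    G β γ ω ≤ 4 / sqrt π * (β / γ) * exp (-(γ ^ 2 / (64 * β ^ 2))) := by
  have ht : 0 < γ / (8 * β) := by positivity
  have hu : (ω - γ / 2) / (2 * β) ≤ -(γ / (8 * β)) := by
    rw [div_le_iff₀ (by positivity)]
    field_simp
    linarith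
  calc G β γ ω ≤ 1 / sqrt π * (exp (-(γ / (8 * β)) ^ 2) / (2 * (γ / (8 * β)))) :=
        mul_le_mul_of_nonneg_left (integral_Iio_exp_neg_sq_le ht hu) (by positivity)
    _ = 4 / sqrt π * (β / γ) * exp (-(γ ^ 2 / (64 * β ^ 2))) := by
        field_simp
        ring_nf

theorem norm_sum_sq_eq_sum_norm_sq_of_inner_eq_zero {𝕜 E ι : Type*} [RCLike 𝕜]
    [NormedAddCommGroup E] [InnerProductSpace 𝕜 E] (v : ι → E)
    (hv : ∀ i j, i ≠ j → inner 𝕜 (v i) (v j) = 0) (s : Finset ι) :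
    ‖∑ i ∈ s, v i‖ ^ 2 = ∑ i ∈ s, ‖v i‖ ^ 2 := by
  classical
  induction s using Finset.induction_on with
  | empty => simp
  | insert a s ha ih =>
    have horth : inner 𝕜 (v a) (∑ i ∈ s, v i) = 0 := by
      rw [inner_sum]
      exact Finset.sum_eq_zero fun i hi => hv a i (ne_of_mem_of_not_mem hi ha).symm
    rw [Finset.sum_insert ha, Finset.sum_insert ha, ← ih, sq, sq, sq,
      norm_add_sq_eq_norm_sq_add_norm_sq_of_inner_eq_zero _ _ horth]

section ResolutionOfIdentity

variable {V ι : Type*} [NormedAddCommGroup V] [InnerProductSpace ℂ V] [CompleteSpace V]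
  {P : ι → V →L[ℂ] V} (hsa : ∀ μ, IsSelfAdjoint (P μ)) (horth : ∀ μ ν, μ ≠ ν → P μ * P ν = 0)
include hsa horth

theorem inner_apply_eq_zero_of_ne {μ ν : ι} (h : μ ≠ ν) (x y : V) :
    inner ℂ (P μ x) (P ν y) = 0 := by
  rw [← ContinuousLinearMap.adjoint_inner_right, (hsa μ).adjoint_eq, ← mul_apply_eq_comp,
    horth μ ν h, zero_apply, inner_zero_right]

variable [Fintype ι] (hsum : ∑ μ, P μ = 1)
include hsum

theorem norm_sq_eq_sum_norm_apply_sq (x : V) : ‖x‖ ^ 2 = ∑ μ, ‖P μ x‖ ^ 2 := by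
  have hx : x = ∑ μ, P μ x := by rw [← sum_apply, hsum, one_apply_eq_self]
  conv_lhs => rw [hx]
  exact norm_sum_sq_eq_sum_norm_sq_of_inner_eq_zero (𝕜 := ℂ) _
    (fun μ ν h => inner_apply_eq_zero_of_ne hsa horth h x x) _

theorem norm_le_one_of_resolution (ν : ι) : ‖P ν‖ ≤ 1 := by
  refine ContinuousLinearMap.opNorm_le_bound _ zero_le_one fun x => ?_
  rw [one_mul]
  refine le_of_sq_le_sq ?_ (norm_nonneg x)
  rw [norm_sq_eq_sum_norm_apply_sq hsa horth hsum x]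
  exact Finset.single_le_sum (fun μ _ => sq_nonneg ‖P μ x‖) (Finset.mem_univ ν)

theorem norm_sum_smul_le {g : ι → ℝ} {c : ℝ} (hc : 0 ≤ c) (hg : ∀ μ, |g μ| ≤ c) :
    ‖∑ μ, g μ • P μ‖ ≤ c := by
  refine ContinuousLinearMap.opNorm_le_bound _ hc fun x => ?_
  -- `g μ • P μ x = P μ (g μ • x)`, so the summands are still pairwise orthogonal
  have hsq : ‖(∑ μ, g μ • P μ) x‖ ^ 2 = ∑ μ, |g μ| ^ 2 * ‖P μ x‖ ^ 2 := by
    simp only [sum_apply, smul_apply, ← ContinuousLinearMap.map_smul_of_tower]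
    rw [norm_sum_sq_eq_sum_norm_sq_of_inner_eq_zero (𝕜 := ℂ) _
      (fun μ ν h => inner_apply_eq_zero_of_ne hsa horth h _ _)]
    simp only [ContinuousLinearMap.map_smul_of_tower, norm_smul, Real.norm_eq_abs, mul_pow]
  refine le_of_sq_le_sq ?_ (by positivity)
  rw [hsq, mul_pow, norm_sq_eq_sum_norm_apply_sq hsa horth hsum x, Finset.mul_sum]
  gcongr with μ
  exact hg μ

end ResolutionOfIdentity

theorem stmt12_general {V : Type*} [NormedAddCommGroup V] [InnerProductSpace ℂ V]
    [FiniteDimensional ℂ V]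
    {ι : Type*} [Fintype ι] (E : ι → ℝ) (Pr : ι → (V →L[ℂ] V))
    (hPsa : ∀ μ, IsSelfAdjoint (Pr μ))
    (hPorth : ∀ μ ν, μ ≠ ν → Pr μ * Pr ν = 0)
    (hPsum : ∑ μ, Pr μ = 1)
    (S : Finset ι)
    (γ Δ : ℝ) (hγ : 0 < γ) (hΔγ : Δ < γ / 4)
    (hwidth : ∀ ν ∈ S, ∀ μ : ι, E ν - E μ ≤ Δ)
    (A : V →L[ℂ] V) (β : ℝ) (hβ : 0 < β) :
    ‖∑ μ, ∑ ν ∈ S, G β γ (E ν - E μ) • (Pr μ * A * Pr ν)‖ ≤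
      4 * S.card / Real.sqrt π * (β / γ) * Real.exp (-(γ ^ 2 / (64 * β ^ 2))) * ‖A‖ := by
  set c := 4 / sqrt π * (β / γ) * exp (-(γ ^ 2 / (64 * β ^ 2)))
  have hc : 0 ≤ c := by positivity
  have hfilter : ∀ ν ∈ S, ‖∑ μ, G β γ (E ν - E μ) • Pr μ‖ ≤ c := fun ν hν =>
    norm_sum_smul_le hPsa hPorth hPsum hc fun μ => by
      rw [abs_of_nonneg (G_nonneg _ _ _)]
      exact G_le hβ hγ ((hwidth ν hν μ).trans hΔγ.le)
  have hsplit : ∑ μ, ∑ ν ∈ S, G β γ (E ν - E μ) • (Pr μ * A * Pr ν)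
      = ∑ ν ∈ S, (∑ μ, G β γ (E ν - E μ) • Pr μ) * A * Pr ν := by
    rw [Finset.sum_comm]
    simp only [Finset.sum_mul, smul_mul_assoc]
  calc ‖∑ μ, ∑ ν ∈ S, G β γ (E ν - E μ) • (Pr μ * A * Pr ν)‖
      ≤ ∑ ν ∈ S, ‖(∑ μ, G β γ (E ν - E μ) • Pr μ) * A * Pr ν‖ := hsplit ▸ norm_sum_le _ _
    _ ≤ ∑ ν ∈ S, c * ‖A‖ * 1 := Finset.sum_le_sum fun ν hν => norm_mul₃_le.trans <| by
        gcongr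
        exacts [hfilter ν hν, norm_le_one_of_resolution hPsa hPorth hPsum ν]
    _ = 4 * S.card / sqrt π * (β / γ) * exp (-(γ ^ 2 / (64 * β ^ 2))) * ‖A‖ := by
        rw [Finset.sum_const, nsmul_eq_mul]
        ring

theorem stmt12 {V : Type*} [NormedAddCommGroup V] [InnerProductSpace ℂ V]
    [FiniteDimensional ℂ V]
    {ι : Type*} [Fintype ι] (E : ι → ℝ) (Pr : ι → (V →L[ℂ] V))
    (hPsa : ∀ μ, IsSelfAdjoint (Pr μ))
    (hPidem : ∀ μ, Pr μ * Pr μ = Pr μ)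
    (hPorth : ∀ μ ν, μ ≠ ν → Pr μ * Pr ν = 0)
    (hPsum : ∑ μ, Pr μ = 1)
    (H : V →L[ℂ] V) (hH : H = ∑ μ, (E μ : ℂ) • Pr μ)
    (S : Finset ι) (hS : S.Nonempty)
    (γ Δ : ℝ) (hγ : 0 < γ) (hΔ0 : 0 ≤ Δ) (hΔγ : Δ < γ / 4)
    (hwidth : ∀ ν ∈ S, ∀ μ : ι, E ν - E μ ≤ Δ)
    (A : V →L[ℂ] V) (β : ℝ) (hβ : 0 < β) :
    ‖∑ μ, ∑ ν ∈ S, G β γ (E ν - E μ) • (Pr μ * A * Pr ν)‖ ≤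
      4 * S.card / Real.sqrt π * (β / γ) * Real.exp (-(γ ^ 2 / (64 * β ^ 2))) * ‖A‖ :=
  stmt12_general E Pr hPsa hPorth hPsum S γ Δ hγ hΔγ hwidth A β hβ
end
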